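/- Let V be a complex vector space of dimension 2m (m ≥ 1) equipped with a nondegenerate alternating bilinear form ⟨ , ⟩. Let λ be a symmetric partition contained in the m×m square (i.e., λ = λ') and let F• be an isotropic full flag (i.e., ∠(F_{2m−i}) = Fᵢ for all i). Then the Schubert variety X_λ F• is stable under the Lagrangian involution: {∠(H) | H ∈ X_λ F•} = X_λ F•. -/

import Mathlib

open Module

/-- The annihilator `∠(W) = {v ∈ V | ⟨v,w⟩ = 0 for all w ∈ W}` of a subspace `W`
with respect to a bilinear form `B`. -/
def ann {V : Type*} [AddCommGroup V] [Module ℂ V]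
    (B : LinearMap.BilinForm ℂ V) (W : Submodule ℂ V) : Submodule ℂ V :=
  W.dualAnnihilator.comap B

/-- A full flag `F₀ = 0 ⊊ F₁ ⊊ ⋯ ⊊ F_{2m} = V` with `dim Fᵢ = i`. -/
def IsFullFlag (m : ℕ) {V : Type*} [AddCommGroup V] [Module ℂ V]
    (F : Fin (2 * m + 1) → Submodule ℂ V) : Prop :=
  F 0 = ⊥ ∧ F (Fin.last (2 * m)) = ⊤ ∧ StrictMono F ∧
    ∀ i, finrank ℂ (F i) = (i : ℕ)

/-- The annihilator flag `∠(F•)`, whose `i`-th member is `∠(F_{2m-i})`. -/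
def annFlag (m : ℕ) {V : Type*} [AddCommGroup V] [Module ℂ V]
    (B : LinearMap.BilinForm ℂ V) (F : Fin (2 * m + 1) → Submodule ℂ V) :
    Fin (2 * m + 1) → Submodule ℂ V :=
  fun i => ann B (F i.rev)

/-- The conjugate partition `λ'ⱼ = #{i | λᵢ ≥ j}` of a partition contained in the
`m × m` square, where `lam i` is the `(i+1)`-st part `λ_{i+1}`. -/
def conjugatePartition (m : ℕ) (lam : Fin m → ℕ) : Fin m → ℕ :=
  fun j => (Finset.univ.filter fun i : Fin m => (j : ℕ) + 1 ≤ lam i).card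

/-- The Schubert variety
`X_λ F• = {H | dim H = m and dim (H ∩ F_{m+i-λᵢ}) ≥ i for i = 1,…,m}`. -/
def SchubertVariety (m : ℕ) {V : Type*} [AddCommGroup V] [Module ℂ V]
    (lam : Fin m → ℕ) (F : Fin (2 * m + 1) → Submodule ℂ V) :
    Set (Submodule ℂ V) :=
  {H | finrank ℂ H = m ∧ ∀ i : Fin m,
    (i : ℕ) + 1 ≤
      finrank ℂ ↥(H ⊓ F ⟨m + ((i : ℕ) + 1) - lam i, by have := i.isLt; omega⟩)}

/-! For an isotropic flag, `F_{m+i-λ'ᵢ} = ∠(F_{m+λ'ᵢ-i})`, and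
`dim (∠H ∩ ∠W) = dim V - dim H - dim W + dim (H ∩ W)` turns the `i`-th condition on `∠H` into
`dim (H ∩ F_{m+λ'ᵢ-i}) ≥ λ'ᵢ`. That is implied by the `λ'ᵢ`-th condition on `H`, since
`λ_{λ'ᵢ} ≥ i`. So `∠` maps `X_λ F•` into `X_{λ'} F•`; for symmetric `λ` it is an involution
preserving `X_λ F•`. -/

section Annihilator

variable {V : Type*} [AddCommGroup V] [Module ℂ V] {B : LinearMap.BilinForm ℂ V}

lemma ann_eq_orthogonal_flip (W : Submodule ℂ V) : ann B W = B.flip.orthogonal W := by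
  ext v
  simp [ann, Submodule.mem_dualAnnihilator]

lemma ann_sup (H W : Submodule ℂ V) : ann B (H ⊔ W) = ann B H ⊓ ann B W := by
  simp [ann, Submodule.dualAnnihilator_sup_eq, Submodule.comap_inf]

variable [FiniteDimensional ℂ V]

lemma finrank_ann (hB : B.Nondegenerate) (W : Submodule ℂ V) :
    finrank ℂ (ann B W) = finrank ℂ V - finrank ℂ W := by
  rw [ann_eq_orthogonal_flip]
  exact LinearMap.BilinForm.finrank_orthogonal hB.flip W

lemma ann_ann (hB : B.Nondegenerate) (hrefl : B.IsRefl) (W : Submodule ℂ V) :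
    ann B (ann B W) = W := by
  simp only [ann_eq_orthogonal_flip]
  exact LinearMap.BilinForm.orthogonal_orthogonal hB.flip
    (LinearMap.IsRefl.flip_isRefl_iff.mpr hrefl) W

lemma finrank_ann_inf_ann_add (hB : B.Nondegenerate) (H W : Submodule ℂ V) :
    finrank ℂ ↥(ann B H ⊓ ann B W) + finrank ℂ H + finrank ℂ W
      = finrank ℂ V + finrank ℂ ↥(H ⊓ W) := by
  have hsup := Submodule.finrank_sup_add_finrank_inf_eq H W
  have hle := Submodule.finrank_le (H ⊔ W)
  rw [← ann_sup, finrank_ann hB]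
  omega

end Annihilator

section Partition

variable {m : ℕ} {lam : Fin m → ℕ}

lemma conjugatePartition_le (i : Fin m) : conjugatePartition m lam i ≤ m := by
  unfold conjugatePartition
  simpa using Finset.card_filter_le Finset.univ fun t : Fin m => (i : ℕ) + 1 ≤ lam t

lemma lt_of_lt_conjugatePartition (hanti : Antitone lam) {i j : Fin m}
    (h : (j : ℕ) < conjugatePartition m lam i) : (i : ℕ) < lam j := by
  by_contra! hj
  have hsub : Finset.univ.filter (fun t : Fin m => (i : ℕ) + 1 ≤ lam t) ⊆ Finset.Iio j := by
    intro t ht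
    simp only [Finset.mem_filter, Finset.mem_univ, true_and] at ht
    rw [Finset.mem_Iio]
    by_contra! hjt
    have := hanti hjt
    omega
  have := Finset.card_le_card hsub
  rw [Fin.card_Iio] at this
  exact absurd h (by unfold conjugatePartition; omega)

end Partition

section Schubert

variable {m : ℕ} {V : Type*} [AddCommGroup V] [Module ℂ V] [FiniteDimensional ℂ V]
  {lam : Fin m → ℕ} {F : Fin (2 * m + 1) → Submodule ℂ V} {H : Submodule ℂ V}

lemma conjugatePartition_le_finrank_inf (hanti : Antitone lam) (hF : Monotone F)
    (hH : H ∈ SchubertVariety m lam F) (i : Fin m) (k : Fin (2 * m + 1))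
    (hk : m + conjugatePartition m lam i ≤ k + i + 1) :
    conjugatePartition m lam i ≤ finrank ℂ ↥(H ⊓ F k) := by
  cases hc : conjugatePartition m lam i with
  | zero => exact Nat.zero_le _
  | succ j =>
    have hjm : j < m := by have := conjugatePartition_le (lam := lam) i; omega
    have hlt : (i : ℕ) < lam ⟨j, hjm⟩ := lt_of_lt_conjugatePartition hanti (by simp [hc])
    refine (hH.2 ⟨j, hjm⟩).trans (Submodule.finrank_mono (inf_le_inf_left H (hF ?_)))
    simp only [Fin.le_def]
    omega

theorem ann_mem_schubertVariety_conjugatePartition {B : LinearMap.BilinForm ℂ V}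
    (hdim : finrank ℂ V = 2 * m) (hB : B.Nondegenerate) (hanti : Antitone lam)
    (hFmono : Monotone F) (hFrank : ∀ k, finrank ℂ (F k) = k) (hiso : annFlag m B F = F)
    (hH : H ∈ SchubertVariety m lam F) :
    ann B H ∈ SchubertVariety m (conjugatePartition m lam) F := by
  refine ⟨by rw [finrank_ann hB, hdim, hH.1]; omega, fun i => ?_⟩
  have hi := conjugatePartition_le (lam := lam) i
  set k : Fin (2 * m + 1) := ⟨m + ((i : ℕ) + 1) - conjugatePartition m lam i, by omega⟩
  have hFk : F k = ann B (F k.rev) := (congrFun hiso k).symm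
  have hrev := conjugatePartition_le_finrank_inf hanti hFmono hH i k.rev
    (by simp only [Fin.val_rev, k]; omega)
  have hdual := finrank_ann_inf_ann_add hB H (F k.rev)
  rw [← hFk, hFrank, Fin.val_rev, hdim, hH.1] at hdual
  have hk : (k : ℕ) = m + ((i : ℕ) + 1) - conjugatePartition m lam i := rfl
  show (i : ℕ) + 1 ≤ finrank ℂ ↥(ann B H ⊓ F k)
  omega

end Schubert

theorem stmt4_general (m : ℕ) (V : Type*) [AddCommGroup V] [Module ℂ V]
    [FiniteDimensional ℂ V] (hdim : finrank ℂ V = 2 * m)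
    (B : LinearMap.BilinForm ℂ V) (halt : B.IsAlt) (hB : B.Nondegenerate)
    (lam : Fin m → ℕ) (hanti : Antitone lam)
    (hsym : conjugatePartition m lam = lam)
    (F : Fin (2 * m + 1) → Submodule ℂ V) (hF : IsFullFlag m F)
    (hiso : annFlag m B F = F) :
    ann B '' SchubertVariety m lam F = SchubertVariety m lam F := by
  obtain ⟨-, -, hFmono, hFrank⟩ := hF
  have hmaps : Set.MapsTo (ann B) (SchubertVariety m lam F) (SchubertVariety m lam F) :=
    fun H hH => hsym ▸
      ann_mem_schubertVariety_conjugatePartition hdim hB hanti hFmono.monotone hFrank hiso hH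
  refine hmaps.image_subset.antisymm fun H hH => ?_
  exact ⟨ann B H, hmaps hH, ann_ann hB halt.isRefl H⟩

theorem stmt4 (m : ℕ) (hm : 1 ≤ m) (V : Type*) [AddCommGroup V] [Module ℂ V]
    [FiniteDimensional ℂ V] (hdim : finrank ℂ V = 2 * m)
    (B : LinearMap.BilinForm ℂ V) (halt : B.IsAlt) (hB : B.Nondegenerate)
    (lam : Fin m → ℕ) (hanti : Antitone lam) (hle : ∀ i, lam i ≤ m)
    (hsym : conjugatePartition m lam = lam)
    (F : Fin (2 * m + 1) → Submodule ℂ V) (hF : IsFullFlag m F)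
    (hiso : annFlag m B F = F) :
    ann B '' SchubertVariety m lam F = SchubertVariety m lam F :=
  stmt4_general m V hdim B halt hB lam hanti hsym F hF hiso
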